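/- arXiv:1601.03720 — 2 statements merged into one kernel-verified Lean document; each statement's English description precedes it below -/
import Mathlib

section
/- Let ρ_sc be the semicircle distribution on [−2,2] with density (1/2π)√(4−x²), and define γ_j ∈ ℝ by ρ_sc((−∞, γ_j]) = j/n for j = 1,…,n−1, with γ_n = 2. Let ν_n = (1/n)∑_{j=1}^n δ_{γ_j}. Then W_2(ρ_sc, ν_n) ≤ C/n^{2/3} for a universal constant C. -/
open MeasureTheory Real

/-- The 2-Wasserstein distance between measures on ℝ. -/
noncomputable def wassersteinDist (p : ℝ) (μ ν : Measure ℝ) : ℝ :=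
  sInf {r : ℝ | ∃ cpl : Measure (ℝ × ℝ), IsProbabilityMeasure cpl ∧
    cpl.map Prod.fst = μ ∧ cpl.map Prod.snd = ν ∧
    r = (∫ x, dist x.1 x.2 ^ p ∂cpl) ^ (1 / p)}

/-- The semicircle distribution on `[−2,2]`, with density `(1/(2π))√(4 − x²)`. -/
noncomputable def semicircle : Measure ℝ :=
  volume.withDensity fun x =>
    ENNReal.ofReal (Set.indicator (Set.Icc (-2) 2)
      (fun x => (1 / (2 * π)) * Real.sqrt (4 - x ^ 2)) x)

/-!
Cut `[-2, 2]` at `-2 = γ₀ < γ₁ < ⋯ < γₙ = 2` into `n` cells `(γⱼ₋₁, γⱼ]` of semicircle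
mass `1/n` and send each cell to its right endpoint. This map pushes `ρ_sc` forward to `νₙ` and
moves no point by more than the widest cell, so `W₂(ρ_sc, νₙ)` is at most the largest cell
width. On the middle half of a cell of width `L` the density is at least `√(L/2)/(2π)`, so the
cell has mass at least `(L/2)^{3/2}/(2π)`; mass `1/n` then forces `L ≤ 2 (2π/n)^{2/3}`.
-/

open Function
open scoped ENNReal

lemma wassersteinDist_le_of_coupling {p : ℝ} {μ ν : Measure ℝ} (cpl : Measure (ℝ × ℝ))
    [IsProbabilityMeasure cpl] (h₁ : cpl.map Prod.fst = μ) (h₂ : cpl.map Prod.snd = ν) :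
    wassersteinDist p μ ν ≤ (∫ x, dist x.1 x.2 ^ p ∂cpl) ^ (1 / p) :=
  csInf_le
    ⟨0, fun _ ⟨_, _, _, _, hr⟩ ↦ hr ▸
      rpow_nonneg (integral_nonneg fun _ ↦ rpow_nonneg dist_nonneg _) _⟩
    ⟨cpl, ‹_›, h₁, h₂, rfl⟩

lemma wassersteinDist_map_le {p Δ : ℝ} (hp : 0 < p) (μ : Measure ℝ) [IsProbabilityMeasure μ]
    {T : ℝ → ℝ} (hT : Measurable T) (hΔ : ∀ᵐ x ∂μ, dist x (T x) ≤ Δ) :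
    wassersteinDist p μ (μ.map T) ≤ Δ := by
  have hgraph : Measurable fun x ↦ (x, T x) := measurable_id.prodMk hT
  have : IsProbabilityMeasure (μ.map fun x ↦ (x, T x)) :=
    Measure.isProbabilityMeasure_map hgraph.aemeasurable
  have hΔ₀ : 0 ≤ Δ := let ⟨_, hx⟩ := hΔ.exists; dist_nonneg.trans hx
  have hcost : ∫ x, dist x.1 x.2 ^ p ∂(μ.map fun x ↦ (x, T x)) ≤ Δ ^ p := by
    rw [integral_map hgraph.aemeasurable
      ((continuous_fst.dist continuous_snd).measurable.pow_const p).aestronglyMeasurable]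
    refine (le_abs_self _).trans ?_
    have hbound : ∀ᵐ x ∂μ, ‖dist x (T x) ^ p‖ ≤ Δ ^ p := hΔ.mono fun x hx ↦ by
      rw [Real.norm_of_nonneg (rpow_nonneg dist_nonneg _)]
      exact rpow_le_rpow dist_nonneg hx hp.le
    simpa using norm_integral_le_of_norm_le_const hbound
  calc wassersteinDist p μ (μ.map T)
      ≤ (∫ x, dist x.1 x.2 ^ p ∂(μ.map fun x ↦ (x, T x))) ^ (1 / p) :=
        wassersteinDist_le_of_coupling _
          (by rw [Measure.map_map measurable_fst hgraph]; exact Measure.map_id)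
          (Measure.map_map measurable_snd hgraph)
    _ ≤ (Δ ^ p) ^ (1 / p) :=
        rpow_le_rpow (integral_nonneg fun _ ↦ rpow_nonneg dist_nonneg _) hcost (by positivity)
    _ = Δ := by rw [one_div, rpow_rpow_inv hΔ₀ hp.ne']

section StepFunction

variable {α ι : Type*} [Fintype ι] {I : ι → Set α} {y : ι → ℝ}

noncomputable def stepFunction (I : ι → Set α) (y : ι → ℝ) (x : α) : ℝ :=
  ∑ j, (I j).indicator (fun _ ↦ y j) x

lemma stepFunction_of_mem (hI : Pairwise (Disjoint on I)) {j : ι} {x : α} (hx : x ∈ I j) :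
    stepFunction I y x = y j := by
  rw [stepFunction, Finset.sum_eq_single j (fun i _ hij ↦ Set.indicator_of_notMem
    ((hI hij).notMem_of_mem_right hx) _) (by simp), Set.indicator_of_mem hx]

variable [MeasurableSpace α]

lemma measurable_stepFunction (hI : ∀ j, MeasurableSet (I j)) :
    Measurable (stepFunction I y) :=
  Finset.measurable_sum _ fun j _ ↦ measurable_const.indicator (hI j)

lemma map_stepFunction {μ : Measure α} (hI : ∀ j, MeasurableSet (I j))
    (hdisj : Pairwise (Disjoint on I)) (hcover : ∀ᵐ x ∂μ, x ∈ ⋃ j, I j) :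
    μ.map (stepFunction I y) = ∑ j, μ (I j) • Measure.dirac (y j) := by
  have hconst (j : ι) :
      (μ.restrict (I j)).map (stepFunction I y) = μ (I j) • Measure.dirac (y j) := by
    rw [Measure.map_congr ((ae_restrict_iff' (hI j)).2 (.of_forall fun x hx ↦
      stepFunction_of_mem hdisj hx)), Measure.map_const, Measure.restrict_apply_univ]
  conv_lhs => rw [← Measure.restrict_eq_self_of_ae_mem hcover, Measure.restrict_iUnion hdisj hI,
    Measure.map_sum (measurable_stepFunction hI).aemeasurable, Measure.sum_fintype]
  simp only [hconst]

end StepFunction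

section Quantiles

variable {μ : Measure ℝ} {n : ℕ} {F : Fin (n + 1) → ℝ}

lemma strictMono_of_measure_Iic (hF : ∀ k, μ (Set.Iic (F k)) = ENNReal.ofReal (k / n)) :
    StrictMono F := by
  intro k l hkl
  by_contra! hlk
  have hkl' : (k : ℝ) < l := by exact_mod_cast hkl
  have hn : (0 : ℝ) < n := by exact_mod_cast (by omega : 0 < n)
  have := measure_mono (μ := μ) (Set.Iic_subset_Iic.2 hlk)
  rw [hF, hF, ENNReal.ofReal_le_ofReal_iff (by positivity)] at this
  exact (div_lt_div_of_pos_right hkl' hn).not_ge this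

lemma measure_Ioc_castSucc_succ (hF : ∀ k, μ (Set.Iic (F k)) = ENNReal.ofReal (k / n))
    (hmono : Monotone F) (j : Fin n) :
    μ (Set.Ioc (F j.castSucc) (F j.succ)) = (n : ℝ≥0∞)⁻¹ := by
  have hn : (0 : ℝ) < n := by exact_mod_cast j.pos
  have hdiff :
      Set.Ioc (F j.castSucc) (F j.succ) = Set.Iic (F j.succ) \ Set.Iic (F j.castSucc) := by
    ext; simp [and_comm]
  rw [hdiff, measure_sdiff (Set.Iic_subset_Iic.2 (hmono j.castSucc_le_succ))
    measurableSet_Iic.nullMeasurableSet (by simp [hF]), hF, hF,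
    ← ENNReal.ofReal_sub _ (by positivity), Fin.val_succ, Fin.val_castSucc, Nat.cast_add_one,
    add_div, add_sub_cancel_left, one_div, ENNReal.ofReal_inv_of_pos hn, ENNReal.ofReal_natCast]

lemma pairwise_disjoint_Ioc_castSucc_succ (hmono : Monotone F) :
    Pairwise (Disjoint on fun j : Fin n ↦ Set.Ioc (F j.castSucc) (F j.succ)) :=
  (pairwise_disjoint_on _).2 fun _ _ hij ↦
    Set.Ioc_disjoint_Ioc_of_le (hmono (Fin.succ_le_castSucc_iff.2 hij))

lemma wassersteinDist_le_of_quantiles [IsProbabilityMeasure μ] (hn : 0 < n)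
    (hF : ∀ k, μ (Set.Iic (F k)) = ENNReal.ofReal (k / n)) {p Δ : ℝ} (hp : 0 < p)
    (hΔ : ∀ j : Fin n, F j.succ - F j.castSucc ≤ Δ) :
    wassersteinDist p μ ((n : ℝ≥0∞)⁻¹ • ∑ j : Fin n, Measure.dirac (F j.succ)) ≤ Δ := by
  set I := fun j : Fin n ↦ Set.Ioc (F j.castSucc) (F j.succ)
  have hmono := (strictMono_of_measure_Iic hF).monotone
  have hdisj := pairwise_disjoint_Ioc_castSucc_succ hmono
  have hmass := measure_Ioc_castSucc_succ hF hmono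
  have hcover : ∀ᵐ x ∂μ, x ∈ ⋃ j, I j := by
    rw [ae_mem_iff_measure_eq
        (MeasurableSet.iUnion fun _ ↦ measurableSet_Ioc).nullMeasurableSet,
      measure_iUnion hdisj fun _ ↦ measurableSet_Ioc, tsum_fintype]
    simp [hmass, ENNReal.mul_inv_cancel (Nat.cast_ne_zero.2 hn.ne') (ENNReal.natCast_ne_top n)]
  have hmap : μ.map (stepFunction I (F ∘ Fin.succ)) =
      (n : ℝ≥0∞)⁻¹ • ∑ j : Fin n, Measure.dirac (F j.succ) := by
    rw [map_stepFunction (fun _ ↦ measurableSet_Ioc) hdisj hcover, Finset.smul_sum]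
    simp [hmass]
  rw [← hmap]
  refine wassersteinDist_map_le hp μ (measurable_stepFunction fun _ ↦ measurableSet_Ioc) ?_
  filter_upwards [hcover] with x hx
  obtain ⟨j, hj⟩ := Set.mem_iUnion.1 hx
  rw [stepFunction_of_mem hdisj hj, comp_apply, Real.dist_eq, abs_le]
  constructor <;> linarith [hj.1, hj.2, hΔ j]

end Quantiles

section Semicircle

lemma semicircle_Iic_neg_two : semicircle (Set.Iic (-2)) = 0 := by
  rw [semicircle, withDensity_apply _ measurableSet_Iic]
  refine (setLIntegral_congr_fun measurableSet_Iic fun x hx ↦ ?_).trans lintegral_zero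
  rw [Set.indicator_apply_eq_zero.2 fun h ↦ ?_, ENNReal.ofReal_zero]
  rw [le_antisymm (Set.mem_Iic.1 hx) h.1]
  norm_num

instance : IsProbabilityMeasure semicircle := by
  have hint : Integrable (Set.indicator (Set.Icc (-2 : ℝ) 2)
      (fun x ↦ (1 / (2 * π)) * √(4 - x ^ 2))) :=
    (integrable_indicator_iff measurableSet_Icc).2
      ((continuousOn_const.mul (by fun_prop)).integrableOn_compact isCompact_Icc)
  have hsqrt : ∫ x in (-2 : ℝ)..2, √(4 - x ^ 2) = 2 * π := by
    have (x : ℝ) : √(4 - x ^ 2) = 2 * √(1 - (x / 2) ^ 2) := by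
      rw [← sqrt_sq (by norm_num : (0 : ℝ) ≤ 2), ← sqrt_mul (by norm_num)]
      ring_nf
    simp only [this, intervalIntegral.integral_const_mul,
      intervalIntegral.integral_comp_div (fun u ↦ √(1 - u ^ 2)) two_ne_zero]
    norm_num [integral_sqrt_one_sub_sq]
    ring
  constructor
  rw [semicircle, withDensity_apply _ MeasurableSet.univ, Measure.restrict_univ,
    ← ofReal_integral_eq_lintegral_ofReal hint (.of_forall fun x ↦ Set.indicator_nonneg
      (fun _ _ ↦ by positivity) x), integral_indicator measurableSet_Icc,
    integral_Icc_eq_integral_Ioc, ← intervalIntegral.integral_of_le (by norm_num),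
    intervalIntegral.integral_const_mul, hsqrt]
  field_simp
  simp

lemma ofReal_le_semicircle_Ioc {a b : ℝ} (ha : -2 ≤ a) (hab : a ≤ b) (hb : b ≤ 2) :
    ENNReal.ofReal ((b - a) / 2 * √((b - a) / 2) / (2 * π)) ≤ semicircle (Set.Ioc a b) := by
  set L := b - a
  set J := Set.Ioo (a + L / 4) (b - L / 4)
  have hJ : J ⊆ Set.Ioc a b := fun x hx ↦ ⟨by linarith [hx.1], by linarith [hx.2]⟩
  have hdensity (x : ℝ) (hx : x ∈ J) : ENNReal.ofReal (√(L / 2) / (2 * π)) ≤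
      ENNReal.ofReal ((Set.Icc (-2) 2).indicator (fun x ↦ 1 / (2 * π) * √(4 - x ^ 2)) x) := by
    obtain ⟨hax, hxb⟩ := hx
    rw [Set.indicator_of_mem (show x ∈ Set.Icc (-2 : ℝ) 2 from ⟨by linarith, by linarith⟩),
      one_div_mul_eq_div]
    gcongr
    -- `2 - x` and `2 + x` both exceed `L / 4` and sum to `4`
    nlinarith [mul_pos (by linarith : 0 < 2 - x - L / 4) (by linarith : 0 < 2 + x - L / 4)]
  calc ENNReal.ofReal (L / 2 * √(L / 2) / (2 * π))
      = ∫⁻ _ in J, ENNReal.ofReal (√(L / 2) / (2 * π)) := by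
        rw [setLIntegral_const, Real.volume_Ioo, ← ENNReal.ofReal_mul (by positivity)]
        congr 1
        simp only [L]
        ring
    _ ≤ semicircle J := by
        rw [semicircle, withDensity_apply _ measurableSet_Ioo]
        exact setLIntegral_mono' measurableSet_Ioo hdensity
    _ ≤ semicircle (Set.Ioc a b) := measure_mono hJ

lemma le_rpow_two_div_three_of_mul_sqrt_le {s t : ℝ} (ht : 0 ≤ t) (h : t * √t ≤ s) :
    t ≤ s ^ (2 / 3 : ℝ) := by
  have ht' : t * √t = t ^ (3 / 2 : ℝ) := by
    rw [show (3 / 2 : ℝ) = 1 + 1 / 2 by norm_num, rpow_add' ht (by norm_num), rpow_one,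
      sqrt_eq_rpow]
  calc t = (t ^ (3 / 2 : ℝ)) ^ (2 / 3 : ℝ) := by rw [← rpow_mul ht]; norm_num
    _ ≤ s ^ (2 / 3 : ℝ) := by gcongr; exact ht' ▸ h

lemma sub_le_of_semicircle_Ioc_le {a b ε : ℝ} (ha : -2 ≤ a) (hab : a ≤ b) (hb : b ≤ 2)
    (hε : 0 ≤ ε) (h : semicircle (Set.Ioc a b) ≤ ENNReal.ofReal ε) :
    b - a ≤ 2 * (2 * π * ε) ^ (2 / 3 : ℝ) := by
  have hmass := (ofReal_le_semicircle_Ioc ha hab hb).trans h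
  rw [ENNReal.ofReal_le_ofReal_iff hε, div_le_iff₀ (by positivity)] at hmass
  have := le_rpow_two_div_three_of_mul_sqrt_le (by linarith : 0 ≤ (b - a) / 2)
    (hmass.trans_eq (mul_comm _ _))
  linarith

end Semicircle

/-- If `γ_j` are the `n`-quantiles of the semicircle law (with `γ_n = 2`) and
`ν_n = (1/n) ∑ δ_{γ_j}`, then `W₂(ρ_sc, ν_n) ≤ C / n^{2/3}` for a universal constant. -/
theorem wasserstein_semicircle_quantiles :
    ∃ C : ℝ, 0 < C ∧ ∀ (n : ℕ), 0 < n → ∀ γ : Fin n → ℝ,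
      (∀ j : Fin n, semicircle (Set.Iic (γ j)) = ENNReal.ofReal (((j : ℕ) + 1) / n)) →
      (∀ j : Fin n, (j : ℕ) = n - 1 → γ j = 2) →
      wassersteinDist 2 semicircle ((n : ENNReal)⁻¹ • ∑ j : Fin n, Measure.dirac (γ j)) ≤
        C / (n : ℝ) ^ ((2 : ℝ) / 3) := by
  refine ⟨2 * (2 * π) ^ (2 / 3 : ℝ), by positivity, fun n hn γ hγ hlast ↦ ?_⟩
  set F : Fin (n + 1) → ℝ := Fin.cons (-2) γ
  have hF (k : Fin (n + 1)) : semicircle (Set.Iic (F k)) = ENNReal.ofReal (k / n) := by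
    cases k using Fin.cases with
    | zero => simp [F, semicircle_Iic_neg_two]
    | succ j => simpa [F] using hγ j
  have hmono := (strictMono_of_measure_Iic hF).monotone
  have hF_last : F (Fin.last n) = 2 := by
    have hn' : n - 1 < n := by omega
    have : Fin.last n = Fin.succ ⟨n - 1, hn'⟩ := by
      ext
      rw [Fin.val_last, Fin.val_succ, Fin.val_mk]
      omega
    rw [this]
    exact hlast _ rfl
  have hwidth (j : Fin n) :
      F j.succ - F j.castSucc ≤ 2 * (2 * π) ^ (2 / 3 : ℝ) / n ^ (2 / 3 : ℝ) := by
    have := sub_le_of_semicircle_Ioc_le (hmono (Fin.zero_le _)) (hmono j.castSucc_le_succ)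
      (hF_last ▸ hmono (Fin.le_last _)) (inv_nonneg.2 n.cast_nonneg)
      ((measure_Ioc_castSucc_succ hF hmono j).trans_le (by
        rw [ENNReal.ofReal_inv_of_pos (by exact_mod_cast hn), ENNReal.ofReal_natCast]))
    rwa [mul_rpow (by positivity) (by positivity), inv_rpow n.cast_nonneg, ← div_eq_mul_inv,
      ← mul_div_assoc] at this
  exact wassersteinDist_le_of_quantiles hn hF two_pos hwidth
end

section
/- Let A be a fixed n×n Hermitian matrix with operator norm ‖A‖_op, let f : ℝ → ℝ be 1-Lipschitz, and for U unitary let μ_U denote the spectral measure of UAU* + B (B a fixed Hermitian matrix). Then the map U ↦ ∫ f dμ_U is (2‖A‖_op/√n)-Lipschitz on the unitary group U(n) with respect to the Hilbert–Schmidt distance. -/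
open Matrix

/-- The Hilbert–Schmidt (Frobenius) norm of a matrix. -/
noncomputable def hsNorm {n : ℕ} (A : Matrix (Fin n) (Fin n) ℂ) : ℝ :=
  Real.sqrt (∑ i, ∑ j, ‖A i j‖ ^ 2)

/-- The operator (spectral) norm of a square matrix, with respect to Euclidean norms. -/
noncomputable def opNorm {n : ℕ} (A : Matrix (Fin n) (Fin n) ℂ) : ℝ :=
  sSup {r : ℝ | ∃ v : Fin n → ℂ, (∑ j, ‖v j‖ ^ 2) ≤ 1 ∧
    r = Real.sqrt (∑ i, ‖A.mulVec v i‖ ^ 2)}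

/-!
By the Hoffman–Wielandt inequality, the eigenvalues of two Hermitian matrices `M`, `N` can be
matched by a permutation `σ` with `∑ (λᵢ(M) - λ_{σ i}(N))² ≤ ‖M - N‖²_HS`; with Cauchy–Schwarz this
makes `M ↦ (1/n) ∑ f (λᵢ(M))` a `(1/√n)`-Lipschitz function of `M` in the Hilbert–Schmidt norm.
Hoffman–Wielandt itself follows by diagonalising `M = P D_α P*`, `N = Q D_β Q*`: then
`‖M - N‖²_HS = ∑ (αᵢ - βⱼ)² |Sᵢⱼ|²` with `S = P*Q` unitary, the weights `|Sᵢⱼ|²` form a doubly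
stochastic matrix, and by Birkhoff's theorem a linear functional on doubly stochastic matrices
attains its minimum at a permutation matrix.
Finally `UAU* - VAV* = (U - V)AU* + VA(U - V)*` and `‖XY‖_HS ≤ ‖X‖_op ‖Y‖_HS`.
-/

section

variable {n : ℕ}

section Frobenius

attribute [local instance] Matrix.frobeniusNormedAddCommGroup

theorem hsNorm_eq_frobenius_norm (A : Matrix (Fin n) (Fin n) ℂ) : hsNorm A = ‖A‖ := by
  simp only [hsNorm, frobenius_norm_def, Real.rpow_two, Real.sqrt_eq_rpow]

theorem hsNorm_nonneg (A : Matrix (Fin n) (Fin n) ℂ) : 0 ≤ hsNorm A := Real.sqrt_nonneg _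

theorem hsNorm_add_le (A B : Matrix (Fin n) (Fin n) ℂ) : hsNorm (A + B) ≤ hsNorm A + hsNorm B := by
  simp only [hsNorm_eq_frobenius_norm]
  exact norm_add_le A B

theorem hsNorm_conjTranspose (A : Matrix (Fin n) (Fin n) ℂ) : hsNorm Aᴴ = hsNorm A := by
  simp only [hsNorm_eq_frobenius_norm, frobenius_norm_conjTranspose]

end Frobenius

theorem hsNorm_sq (A : Matrix (Fin n) (Fin n) ℂ) : hsNorm A ^ 2 = ∑ i, ∑ j, ‖A i j‖ ^ 2 :=
  Real.sq_sqrt (by positivity)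

section L2Operator

open scoped Matrix.Norms.L2Operator

theorem opNorm_eq_l2_opNorm (A : Matrix (Fin n) (Fin n) ℂ) : opNorm A = ‖A‖ := by
  rw [cstar_norm_def, ← ContinuousLinearMap.sSup_unitClosedBall_eq_norm, opNorm]
  congr 1
  ext r
  simp only [Set.mem_ofPred_eq, Set.mem_image, Metric.mem_closedBall, dist_zero_right,
    EuclideanSpace.norm_eq]
  constructor
  · rintro ⟨v, hv, rfl⟩
    exact ⟨WithLp.toLp 2 v, Real.sqrt_le_one.mpr hv, rfl⟩
  · rintro ⟨x, hx, rfl⟩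
    exact ⟨x.ofLp, Real.sqrt_le_one.mp hx, rfl⟩

theorem opNorm_nonneg (A : Matrix (Fin n) (Fin n) ℂ) : 0 ≤ opNorm A := by
  rw [opNorm_eq_l2_opNorm]; exact norm_nonneg A

theorem opNorm_conjTranspose (A : Matrix (Fin n) (Fin n) ℂ) : opNorm Aᴴ = opNorm A := by
  simp only [opNorm_eq_l2_opNorm, l2_opNorm_conjTranspose]

theorem opNorm_le_one_of_mem_unitaryGroup {U : Matrix (Fin n) (Fin n) ℂ}
    (hU : U ∈ unitaryGroup (Fin n) ℂ) : opNorm U ≤ 1 := by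
  rw [opNorm_eq_l2_opNorm]
  rcases subsingleton_or_nontrivial (Matrix (Fin n) (Fin n) ℂ) with _ | _
  · simp [Subsingleton.elim U 0]
  · exact (CStarRing.norm_of_mem_unitary hU).le

theorem sum_norm_mulVec_sq_le (A : Matrix (Fin n) (Fin n) ℂ) (v : Fin n → ℂ) :
    ∑ i, ‖(A *ᵥ v) i‖ ^ 2 ≤ opNorm A ^ 2 * ∑ i, ‖v i‖ ^ 2 := by
  have h := A.l2_opNorm_mulVec (WithLp.toLp 2 v)
  rw [← opNorm_eq_l2_opNorm] at h
  have h2 := pow_le_pow_left₀ (norm_nonneg _) h 2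
  simpa [mul_pow, EuclideanSpace.norm_sq_eq] using h2

end L2Operator

theorem hsNorm_mul_le_opNorm_mul (A B : Matrix (Fin n) (Fin n) ℂ) :
    hsNorm (A * B) ≤ opNorm A * hsNorm B := by
  have hcol : ∀ j, ∑ i, ‖(A * B) i j‖ ^ 2 ≤ opNorm A ^ 2 * ∑ i, ‖B i j‖ ^ 2 :=
    fun j => sum_norm_mulVec_sq_le A fun k => B k j
  have hsq : hsNorm (A * B) ^ 2 ≤ (opNorm A * hsNorm B) ^ 2 := by
    rw [mul_pow, hsNorm_sq, hsNorm_sq, Finset.sum_comm,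
      Finset.sum_comm (f := fun i j => ‖B i j‖ ^ 2), Finset.mul_sum]
    exact Finset.sum_le_sum fun j _ => hcol j
  exact (pow_le_pow_iff_left₀ (hsNorm_nonneg _)
    (mul_nonneg (opNorm_nonneg A) (hsNorm_nonneg B)) two_ne_zero).1 hsq

theorem hsNorm_mul_le_mul_opNorm (A B : Matrix (Fin n) (Fin n) ℂ) :
    hsNorm (A * B) ≤ hsNorm A * opNorm B := by
  simpa only [← conjTranspose_mul, hsNorm_conjTranspose, opNorm_conjTranspose, mul_comm]
    using hsNorm_mul_le_opNorm_mul Bᴴ Aᴴ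

theorem hsNorm_conj_sub_conj_le {U V : Matrix (Fin n) (Fin n) ℂ} (hU : opNorm U ≤ 1)
    (hV : opNorm V ≤ 1) (A : Matrix (Fin n) (Fin n) ℂ) :
    hsNorm (U * A * Uᴴ - V * A * Vᴴ) ≤ 2 * opNorm A * hsNorm (U - V) := by
  have hsplit : U * A * Uᴴ - V * A * Vᴴ = (U - V) * A * Uᴴ + V * (A * (U - V)ᴴ) := by
    rw [conjTranspose_sub]; noncomm_ring
  have h₁ : hsNorm ((U - V) * A * Uᴴ) ≤ opNorm A * hsNorm (U - V) :=
    calc hsNorm ((U - V) * A * Uᴴ) ≤ hsNorm ((U - V) * A) * opNorm Uᴴ :=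
          hsNorm_mul_le_mul_opNorm _ _
      _ ≤ hsNorm (U - V) * opNorm A * 1 := by
          rw [opNorm_conjTranspose]
          exact mul_le_mul (hsNorm_mul_le_mul_opNorm _ _) hU (opNorm_nonneg U)
            (mul_nonneg (hsNorm_nonneg _) (opNorm_nonneg A))
      _ = opNorm A * hsNorm (U - V) := by ring
  have h₂ : hsNorm (V * (A * (U - V)ᴴ)) ≤ opNorm A * hsNorm (U - V) :=
    calc hsNorm (V * (A * (U - V)ᴴ)) ≤ opNorm V * hsNorm (A * (U - V)ᴴ) :=
          hsNorm_mul_le_opNorm_mul _ _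
      _ ≤ 1 * (opNorm A * hsNorm (U - V)ᴴ) :=
          mul_le_mul hV (hsNorm_mul_le_opNorm_mul _ _) (hsNorm_nonneg _) zero_le_one
      _ = opNorm A * hsNorm (U - V) := by rw [hsNorm_conjTranspose, one_mul]
  calc hsNorm (U * A * Uᴴ - V * A * Vᴴ)
      ≤ hsNorm ((U - V) * A * Uᴴ) + hsNorm (V * (A * (U - V)ᴴ)) := by
        rw [hsplit]; exact hsNorm_add_le _ _
    _ ≤ 2 * opNorm A * hsNorm (U - V) := by linarith

theorem hsNorm_mul_mul_le {P Q : Matrix (Fin n) (Fin n) ℂ} (hP : opNorm P ≤ 1) (hQ : opNorm Q ≤ 1)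
    (X : Matrix (Fin n) (Fin n) ℂ) : hsNorm (P * X * Q) ≤ hsNorm X :=
  calc hsNorm (P * X * Q) ≤ opNorm P * hsNorm X * opNorm Q :=
        (hsNorm_mul_le_mul_opNorm _ _).trans <|
          mul_le_mul_of_nonneg_right (hsNorm_mul_le_opNorm_mul _ _) (opNorm_nonneg Q)
    _ ≤ opNorm P * hsNorm X :=
        mul_le_of_le_one_right (mul_nonneg (opNorm_nonneg P) (hsNorm_nonneg X)) hQ
    _ ≤ hsNorm X := mul_le_of_le_one_left (hsNorm_nonneg X) hP

theorem hsNorm_diagonal_mul_sub_mul_diagonal_sq (a b : Fin n → ℝ) (S : Matrix (Fin n) (Fin n) ℂ) :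
    hsNorm (diagonal (RCLike.ofReal ∘ a) * S - S * diagonal (RCLike.ofReal ∘ b)) ^ 2 =
      ∑ i, ∑ j, (a i - b j) ^ 2 * ‖S i j‖ ^ 2 := by
  rw [hsNorm_sq]
  refine Finset.sum_congr rfl fun i _ => Finset.sum_congr rfl fun j _ => ?_
  rw [Matrix.sub_apply, diagonal_mul, mul_diagonal, Function.comp_apply, Function.comp_apply,
    mul_comm (S i j), ← sub_mul, ← RCLike.ofReal_sub, norm_mul, RCLike.norm_ofReal, mul_pow, sq_abs]

section DoublyStochastic

variable {ι : Type*} [Fintype ι] [DecidableEq ι]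

theorem exists_perm_sum_le_of_mem_doublyStochastic {R : Type*} [Field R] [LinearOrder R]
    [IsStrictOrderedRing R] {D : Matrix ι ι R} (hD : D ∈ doublyStochastic R ι) (c : ι → ι → R) :
    ∃ σ : Equiv.Perm ι, ∑ i, c i (σ i) ≤ ∑ i, ∑ j, c i j * D i j := by
  let L : Matrix ι ι R →ₗ[R] R := ∑ i, ∑ j, c i j • entryLinearMap R R i j
  have hL : ∀ M, L M = ∑ i, ∑ j, c i j * M i j := fun M => by simp [L]
  rw [← SetLike.mem_coe, doublyStochastic_eq_convexHull_permMatrix] at hD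
  obtain ⟨_, ⟨σ, rfl⟩, hσ⟩ := (L.concaveOn convex_univ).exists_le_of_mem_convexHull (by simp) hD
  refine ⟨σ, ?_⟩
  simpa [hL, PEquiv.toMatrix_apply, Equiv.toPEquiv_apply] using hσ

theorem sum_norm_sq_eq_one_of_mem_unitaryGroup {𝕜 : Type*} [RCLike 𝕜] {S : Matrix ι ι 𝕜}
    (hS : S ∈ unitaryGroup ι 𝕜) (i : ι) : ∑ j, ‖S i j‖ ^ 2 = 1 := by
  have h : (S * Sᴴ) i i = 1 := by
    rw [← star_eq_conjTranspose, mem_unitaryGroup_iff.1 hS, one_apply_eq]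
  simp only [mul_apply, conjTranspose_apply, ← starRingEnd_apply, RCLike.mul_conj] at h
  exact_mod_cast h

theorem norm_sq_mem_doublyStochastic_of_mem_unitaryGroup {𝕜 : Type*} [RCLike 𝕜]
    {S : Matrix ι ι 𝕜} (hS : S ∈ unitaryGroup ι 𝕜) :
    of (fun i j => ‖S i j‖ ^ 2) ∈ doublyStochastic ℝ ι := by
  refine mem_doublyStochastic_iff_sum.2 ⟨fun i j => sq_nonneg _,
    sum_norm_sq_eq_one_of_mem_unitaryGroup hS, fun j => ?_⟩
  simpa using sum_norm_sq_eq_one_of_mem_unitaryGroup (Unitary.star_mem hS) j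

end DoublyStochastic

/-- **Hoffman–Wielandt inequality** -/
theorem Matrix.IsHermitian.exists_perm_sum_sq_eigenvalues_sub_le {M N : Matrix (Fin n) (Fin n) ℂ}
    (hM : M.IsHermitian) (hN : N.IsHermitian) :
    ∃ σ : Equiv.Perm (Fin n),
      ∑ i, (hM.eigenvalues i - hN.eigenvalues (σ i)) ^ 2 ≤ hsNorm (M - N) ^ 2 := by
  set P : Matrix (Fin n) (Fin n) ℂ := (hM.eigenvectorUnitary : Matrix (Fin n) (Fin n) ℂ)
  set Q : Matrix (Fin n) (Fin n) ℂ := (hN.eigenvectorUnitary : Matrix (Fin n) (Fin n) ℂ)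
  have hP : P ∈ unitaryGroup (Fin n) ℂ := hM.eigenvectorUnitary.2
  have hQ : Q ∈ unitaryGroup (Fin n) ℂ := hN.eigenvectorUnitary.2
  have hPdiag : star P * M * P = diagonal (RCLike.ofReal ∘ hM.eigenvalues) := by
    simpa using hM.conjStarAlgAut_star_eigenvectorUnitary
  have hQdiag : star Q * N * Q = diagonal (RCLike.ofReal ∘ hN.eigenvalues) := by
    simpa using hN.conjStarAlgAut_star_eigenvectorUnitary
  set S := star P * Q with hSdef
  have hS : S ∈ unitaryGroup (Fin n) ℂ := mul_mem (Unitary.star_mem hP) hQ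
  have hconj : star P * (M - N) * Q =
      diagonal (RCLike.ofReal ∘ hM.eigenvalues) * S -
        S * diagonal (RCLike.ofReal ∘ hN.eigenvalues) := by
    rw [← hPdiag, ← hQdiag]
    calc star P * (M - N) * Q
        = star P * M * (P * star P) * Q - star P * (Q * star Q) * N * Q := by
          rw [mem_unitaryGroup_iff.1 hP, mem_unitaryGroup_iff.1 hQ]; noncomm_ring
      _ = _ := by rw [hSdef]; noncomm_ring
  obtain ⟨σ, hσ⟩ := exists_perm_sum_le_of_mem_doublyStochastic
    (norm_sq_mem_doublyStochastic_of_mem_unitaryGroup hS) fun i j =>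
      (hM.eigenvalues i - hN.eigenvalues j) ^ 2
  refine ⟨σ, hσ.trans ?_⟩
  calc ∑ i, ∑ j, (hM.eigenvalues i - hN.eigenvalues j) ^ 2 * of (fun i j => ‖S i j‖ ^ 2) i j
      = hsNorm (star P * (M - N) * Q) ^ 2 := by
        rw [hconj, hsNorm_diagonal_mul_sub_mul_diagonal_sq]; rfl
    _ ≤ hsNorm (M - N) ^ 2 :=
        pow_le_pow_left₀ (hsNorm_nonneg _) (hsNorm_mul_mul_le
          (opNorm_le_one_of_mem_unitaryGroup (Unitary.star_mem hP))
          (opNorm_le_one_of_mem_unitaryGroup hQ) _) 2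

theorem LipschitzWith.abs_sum_comp_sub_sum_comp_le {ι : Type*} [Fintype ι] {K : NNReal}
    {f : ℝ → ℝ} (hf : LipschitzWith K f) (a b : ι → ℝ) :
    |∑ i, f (a i) - ∑ i, f (b i)| ≤ K * (√(Fintype.card ι) * √(∑ i, (a i - b i) ^ 2)) := by
  have hcs : ∑ i, |a i - b i| ≤ √(Fintype.card ι) * √(∑ i, (a i - b i) ^ 2) := by
    simpa using Real.sum_mul_le_sqrt_mul_sqrt Finset.univ (fun _ => 1) fun i => |a i - b i|
  calc |∑ i, f (a i) - ∑ i, f (b i)| ≤ ∑ i, |f (a i) - f (b i)| := by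
        rw [← Finset.sum_sub_distrib]; exact Finset.abs_sum_le_sum_abs _ _
    _ ≤ ∑ i, K * |a i - b i| := Finset.sum_le_sum fun i _ => by
        simpa only [Real.dist_eq] using hf.dist_le_mul (a i) (b i)
    _ ≤ K * (√(Fintype.card ι) * √(∑ i, (a i - b i) ^ 2)) := by
        rw [← Finset.mul_sum]; gcongr

theorem Matrix.IsHermitian.abs_sum_comp_eigenvalues_sub_le {M N : Matrix (Fin n) (Fin n) ℂ}
    (hM : M.IsHermitian) (hN : N.IsHermitian) {K : NNReal} {f : ℝ → ℝ} (hf : LipschitzWith K f) :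
    |∑ i, f (hM.eigenvalues i) - ∑ i, f (hN.eigenvalues i)| ≤ K * (√n * hsNorm (M - N)) := by
  obtain ⟨σ, hσ⟩ := hM.exists_perm_sum_sq_eigenvalues_sub_le hN
  calc |∑ i, f (hM.eigenvalues i) - ∑ i, f (hN.eigenvalues i)|
      = |∑ i, f (hM.eigenvalues i) - ∑ i, f (hN.eigenvalues (σ i))| := by
        rw [Equiv.sum_comp σ fun j => f (hN.eigenvalues j)]
    _ ≤ K * (√n * √(∑ i, (hM.eigenvalues i - hN.eigenvalues (σ i)) ^ 2)) := by
        simpa using hf.abs_sum_comp_sub_sum_comp_le hM.eigenvalues (hN.eigenvalues ∘ σ)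
    _ ≤ K * (√n * hsNorm (M - N)) := by
        gcongr
        exact (Real.sqrt_le_left (hsNorm_nonneg _)).2 hσ

end

theorem integral_spectralMeasure_randomized_sum_lipschitz_general (n : ℕ)
    (A B U V : Matrix (Fin n) (Fin n) ℂ)
    (hU : U ∈ Matrix.unitaryGroup (Fin n) ℂ) (hV : V ∈ Matrix.unitaryGroup (Fin n) ℂ)
    (f : ℝ → ℝ) (hf : LipschitzWith 1 f)
    (hMU : (U * A * Uᴴ + B).IsHermitian) (hMV : (V * A * Vᴴ + B).IsHermitian) :
    |(1 / n : ℝ) * ∑ j, f (hMU.eigenvalues j) - (1 / n : ℝ) * ∑ j, f (hMV.eigenvalues j)| ≤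
      (2 * opNorm A / Real.sqrt n) * hsNorm (U - V) := by
  have hpert : hsNorm (U * A * Uᴴ + B - (V * A * Vᴴ + B)) ≤ 2 * opNorm A * hsNorm (U - V) := by
    rw [add_sub_add_right_eq_sub]
    exact hsNorm_conj_sub_conj_le (opNorm_le_one_of_mem_unitaryGroup hU)
      (opNorm_le_one_of_mem_unitaryGroup hV) A
  have heig := hMU.abs_sum_comp_eigenvalues_sub_le hMV hf
  rw [NNReal.coe_one, one_mul] at heig
  calc |(1 / n : ℝ) * ∑ j, f (hMU.eigenvalues j) - (1 / n : ℝ) * ∑ j, f (hMV.eigenvalues j)|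
      = (1 / n) * |∑ i, f (hMU.eigenvalues i) - ∑ i, f (hMV.eigenvalues i)| := by
        rw [← mul_sub, abs_mul, abs_of_nonneg (by positivity)]
    _ ≤ (1 / n) * (√n * (2 * opNorm A * hsNorm (U - V))) := by
        gcongr
        exact heig.trans (mul_le_mul_of_nonneg_left hpert (Real.sqrt_nonneg _))
    _ = 2 * opNorm A / √n * hsNorm (U - V) := by
        rw [← mul_assoc, one_div_mul_eq_div, Real.sqrt_div_self']; ring

/-- For `A`, `B` Hermitian and `f : ℝ → ℝ` 1-Lipschitz, the map
`U ↦ ∫ f dμ_{UAU* + B} = (1/n) ∑ f (λ_j(UAU* + B))` is `(2‖A‖_op/√n)`-Lipschitz on the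
unitary group with the Hilbert–Schmidt distance. -/
theorem integral_spectralMeasure_randomized_sum_lipschitz (n : ℕ)
    (A B U V : Matrix (Fin n) (Fin n) ℂ)
    (hA : A.IsHermitian) (hB : B.IsHermitian)
    (hU : U ∈ Matrix.unitaryGroup (Fin n) ℂ) (hV : V ∈ Matrix.unitaryGroup (Fin n) ℂ)
    (f : ℝ → ℝ) (hf : LipschitzWith 1 f)
    (hMU : (U * A * Uᴴ + B).IsHermitian) (hMV : (V * A * Vᴴ + B).IsHermitian) :
    |(1 / n : ℝ) * ∑ j, f (hMU.eigenvalues j) - (1 / n : ℝ) * ∑ j, f (hMV.eigenvalues j)| ≤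
      (2 * opNorm A / Real.sqrt n) * hsNorm (U - V) :=
  integral_spectralMeasure_randomized_sum_lipschitz_general n A B U V hU hV f hf hMU hMV
end
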